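/- Let p, q ≥ 0 with p + q < 1, let h be the binary entropy in nats, and set φ = (h(p) − h(q))/(1−p−q). For γ ∈ [0,1] define T(γ) = (1−p)γ + q(1−γ) and I(γ) = h(T(γ)) − (γ·h(p) + (1−γ)·h(q)) (the mutual information of the p–q channel with input distribution P(X=0) = γ). Then the maximum of I over γ ∈ [0,1] is attained at γ* = (1/(1+e^φ) − q)/(1−p−q), and the maximum value equals D_KL(q ‖ 1/(1+e^φ)) = D_KL(p ‖ 1/(1+e^{−φ})). -/

import Mathlib

/-!
For every reference output law `s ∈ (0, 1)` one has the identity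
`I(γ) = γ D(1-p ‖ s) + (1-γ) D(q ‖ s) - D(T(γ) ‖ s)`.
The choice `s = 1/(1+e^φ)`, i.e. `log((1-s)/s) = φ`, makes the divergences of the two rows
`D(1-p ‖ s)` and `D(q ‖ s)` equal, so `I(γ) = D(q ‖ s) - D(T(γ) ‖ s) ≤ D(q ‖ s)` by Gibbs'
inequality, with equality exactly when `T(γ) = s`, i.e. at `γ*`. Gibbs' inequality with reference
law `1 - p` (and, symmetrically, `q`) also gives `q ≤ s ≤ 1 - p`, that is `γ* ∈ [0, 1]`.
Finally `D(1-p ‖ s) = D(p ‖ 1-s)` and `1 - s = 1/(1+e^{-φ})`.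
-/

open Real Set

noncomputable section

/-- KL divergence between Bernoulli(r) and Bernoulli(s) (natural log). -/
def klBer (r s : ℝ) : ℝ := r * Real.log (r / s) + (1 - r) * Real.log ((1 - r) / (1 - s))

/-- Binary entropy in nats. -/
def binEnt (x : ℝ) : ℝ := -x * Real.log x - (1 - x) * Real.log (1 - x)

/-- `P(Y = 0)` for the p–q channel with `P(X = 0) = γ`. -/
def Tpq (p q γ : ℝ) : ℝ := (1 - p) * γ + q * (1 - γ)

/-- Mutual information of the p–q channel with input distribution `P(X = 0) = γ`. -/
def mutInf (p q γ : ℝ) : ℝ := binEnt (Tpq p q γ) - (γ * binEnt p + (1 - γ) * binEnt q)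

lemma mul_log_div (r : ℝ) {s : ℝ} (hs : s ≠ 0) :
    r * log (r / s) = r * log r - r * log s := by
  rcases eq_or_ne r 0 with rfl | hr
  · simp
  · rw [log_div hr hs]; ring

lemma klBer_eq_neg_binEnt (r : ℝ) {s : ℝ} (hs0 : s ≠ 0) (hs1 : s ≠ 1) :
    klBer r s = -binEnt r - r * log s - (1 - r) * log (1 - s) := by
  rw [klBer, binEnt, mul_log_div r hs0, mul_log_div (1 - r) (sub_ne_zero.mpr hs1.symm)]
  ring

@[simp]
lemma klBer_self (s : ℝ) : klBer s s = 0 := by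
  simp [klBer]

lemma klBer_one_sub_one_sub (r s : ℝ) : klBer (1 - r) (1 - s) = klBer r s := by
  simp only [klBer, sub_sub_cancel]
  ring

lemma klBer_eq_klFun {r s : ℝ} (hs0 : 0 < s) (hs1 : s < 1) :
    klBer r s = s * InformationTheory.klFun (r / s) +
      (1 - s) * InformationTheory.klFun ((1 - r) / (1 - s)) := by
  have hs1' : 1 - s ≠ 0 := by linarith
  simp only [klBer, InformationTheory.klFun]
  field_simp
  ring

lemma klBer_nonneg {r s : ℝ} (hr0 : 0 ≤ r) (hr1 : r ≤ 1) (hs0 : 0 < s) (hs1 : s < 1) :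
    0 ≤ klBer r s := by
  rw [klBer_eq_klFun hs0 hs1]
  have h₁ := InformationTheory.klFun_nonneg (div_nonneg hr0 hs0.le)
  have h₂ := InformationTheory.klFun_nonneg
    (div_nonneg (sub_nonneg.mpr hr1) (sub_pos.mpr hs1).le)
  nlinarith

lemma log_sigmoid_sub_log_one_sub_sigmoid (θ : ℝ) :
    log (sigmoid θ) - log (1 - sigmoid θ) = θ := by
  rw [← sigmoid_neg, ← sigmoid_mul_rexp_neg, log_mul (sigmoid_pos θ).ne' (exp_pos _).ne',
    log_exp]
  ring

lemma sigmoid_log_div_one_sub {x : ℝ} (hx0 : 0 < x) (hx1 : x < 1) :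
    sigmoid (log (x / (1 - x))) = x := by
  have hx1' : 0 < 1 - x := by linarith
  rw [sigmoid_def, ← log_inv, exp_log (by positivity), inv_div]
  field_simp
  ring

lemma one_div_one_add_exp (x : ℝ) : 1 / (1 + exp x) = sigmoid (-x) := by
  rw [sigmoid_def, neg_neg, one_div]

lemma Tpq_eq (p q γ : ℝ) : Tpq p q γ = q + (1 - p - q) * γ := by
  rw [Tpq]; ring

lemma Tpq_mem_Icc {p q γ : ℝ} (hp0 : 0 ≤ p) (hp1 : p ≤ 1) (hq0 : 0 ≤ q) (hq1 : q ≤ 1)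
    (hγ : γ ∈ Icc (0 : ℝ) 1) : Tpq p q γ ∈ Icc (0 : ℝ) 1 := by
  obtain ⟨hγ0, hγ1⟩ := hγ
  constructor <;> rw [Tpq] <;> nlinarith

lemma Tpq_sub_div {p q : ℝ} (s : ℝ) (hc : 1 - p - q ≠ 0) :
    Tpq p q ((s - q) / (1 - p - q)) = s := by
  rw [Tpq_eq]; field_simp; ring

lemma mutInf_eq_klBer_sub_klBer (p q γ : ℝ) {s : ℝ} (hs0 : s ≠ 0) (hs1 : s ≠ 1) :
    mutInf p q γ =
      γ * klBer (1 - p) s + (1 - γ) * klBer q s - klBer (Tpq p q γ) s := by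
  simp only [klBer_eq_neg_binEnt _ hs0 hs1, mutInf, binEnt, Tpq, sub_sub_cancel]
  ring

lemma klBer_sigmoid_sub_klBer_sigmoid (p q θ : ℝ) :
    klBer q (sigmoid θ) - klBer (1 - p) (sigmoid θ) =
      binEnt p - binEnt q + (1 - p - q) * θ := by
  have hlog := log_sigmoid_sub_log_one_sub_sigmoid θ
  rw [klBer_eq_neg_binEnt q (sigmoid_pos θ).ne' (sigmoid_lt_one θ).ne,
    klBer_eq_neg_binEnt (1 - p) (sigmoid_pos θ).ne' (sigmoid_lt_one θ).ne]
  simp only [binEnt, sub_sub_cancel]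
  linear_combination (1 - p - q) * hlog

lemma klBer_one_sub_sigmoid_neg_eq {p q φ : ℝ}
    (hφ : (1 - p - q) * φ = binEnt p - binEnt q) :
    klBer (1 - p) (sigmoid (-φ)) = klBer q (sigmoid (-φ)) := by
  linarith [klBer_sigmoid_sub_klBer_sigmoid p q (-φ)]

lemma sigmoid_neg_le_one_sub {p q φ : ℝ} (hφ : (1 - p - q) * φ = binEnt p - binEnt q)
    (hp0 : 0 ≤ p) (hq0 : 0 ≤ q) (hpq : p + q < 1) :
    sigmoid (-φ) ≤ 1 - p := by
  rcases hp0.eq_or_lt with rfl | hp0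
  · simpa using sigmoid_le_one (-φ)
  have hp1 : p < 1 := by linarith
  set θ := log ((1 - p) / (1 - (1 - p)))
  have hθ : sigmoid θ = 1 - p := sigmoid_log_div_one_sub (by linarith) (by linarith)
  -- Gibbs' inequality at the reference law `1 - p` says `(1 - p - q) (φ + θ) ≥ 0`.
  have hgibbs := klBer_nonneg hq0 (by linarith) (by linarith : 0 < 1 - p) (by linarith)
  have hsub := klBer_sigmoid_sub_klBer_sigmoid p q θ
  rw [hθ, klBer_self, sub_zero] at hsub
  have : -φ ≤ θ := by nlinarith
  exact hθ ▸ sigmoid_le this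

lemma le_sigmoid_neg {p q φ : ℝ} (hφ : (1 - p - q) * φ = binEnt p - binEnt q)
    (hp0 : 0 ≤ p) (hq0 : 0 ≤ q) (hpq : p + q < 1) : q ≤ sigmoid (-φ) := by
  have hφ' : (1 - q - p) * -φ = binEnt q - binEnt p := by linarith
  have := sigmoid_neg_le_one_sub hφ' hq0 hp0 (by linarith)
  rw [neg_neg, ← neg_neg φ, sigmoid_neg] at this
  linarith

/-- **Capacity of the p–q channel** (Lemma A.15).  With
`φ = (h(p) - h(q))/(1-p-q)` and `γ* = (1/(1+e^φ) - q)/(1-p-q)`, the mutual information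
`I(γ)` is maximized over `γ ∈ [0,1]` at `γ*`, and the maximum value equals
`D(q ‖ 1/(1+e^φ)) = D(p ‖ 1/(1+e^{-φ}))`. -/
theorem pq_channel_capacity
    (p q : ℝ) (hp : 0 ≤ p) (hq : 0 ≤ q) (hpq : p + q < 1) :
    (1 / (1 + Real.exp ((binEnt p - binEnt q) / (1 - p - q))) - q) / (1 - p - q) ∈
      Set.Icc (0 : ℝ) 1 ∧
    (∀ γ ∈ Set.Icc (0 : ℝ) 1, mutInf p q γ ≤
      mutInf p q ((1 / (1 + Real.exp ((binEnt p - binEnt q) / (1 - p - q))) - q) /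
        (1 - p - q))) ∧
    mutInf p q ((1 / (1 + Real.exp ((binEnt p - binEnt q) / (1 - p - q))) - q) /
        (1 - p - q)) =
      klBer q (1 / (1 + Real.exp ((binEnt p - binEnt q) / (1 - p - q)))) ∧
    klBer q (1 / (1 + Real.exp ((binEnt p - binEnt q) / (1 - p - q)))) =
      klBer p (1 / (1 + Real.exp (-((binEnt p - binEnt q) / (1 - p - q))))) := by
  have hc : 0 < 1 - p - q := by linarith
  simp only [one_div_one_add_exp, neg_neg]
  set φ := (binEnt p - binEnt q) / (1 - p - q)
  have hφ : (1 - p - q) * φ = binEnt p - binEnt q := mul_div_cancel₀ _ hc.ne'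
  set s := sigmoid (-φ)
  have hs0 : s ≠ 0 := (sigmoid_pos _).ne'
  have hs1 : s ≠ 1 := (sigmoid_lt_one _).ne
  have hqs : q ≤ s := le_sigmoid_neg hφ hp hq hpq
  have hsp : s ≤ 1 - p := sigmoid_neg_le_one_sub hφ hp hq hpq
  have hI : ∀ γ, mutInf p q γ = klBer q s - klBer (Tpq p q γ) s := fun γ => by
    rw [mutInf_eq_klBer_sub_klBer p q γ hs0 hs1, klBer_one_sub_sigmoid_neg_eq hφ]
    ring
  have hIopt : mutInf p q ((s - q) / (1 - p - q)) = klBer q s := by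
    rw [hI, Tpq_sub_div s hc.ne', klBer_self, sub_zero]
  refine ⟨⟨div_nonneg (by linarith) hc.le, (div_le_one hc).mpr (by linarith)⟩,
    fun γ hγ => ?_, hIopt, ?_⟩
  · obtain ⟨hT0, hT1⟩ := Tpq_mem_Icc hp (by linarith) hq (by linarith) hγ
    have := klBer_nonneg hT0 hT1 (sigmoid_pos (-φ)) (sigmoid_lt_one (-φ))
    rw [hI, hIopt]
    linarith
  · rw [← neg_neg φ, sigmoid_neg, ← klBer_one_sub_sigmoid_neg_eq hφ,
      ← klBer_one_sub_one_sub p, sub_sub_cancel]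

end
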